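/- arXiv:2305.14168 — 5 statements merged into one kernel-verified Lean document; each statement's English description precedes it below -/
import Mathlib

section
/- Let (Γ_Qual, Γ_Forb) be an access structure on Fin n. If there exists an SXVCS for (Γ_Qual, Γ_Forb) with pixel expansion m and average contrast α, then there exists a PXVCS for (Γ_Qual, Γ_Forb) with pixel expansion 1 and average contrast equal to α. -/
open scoped Classical

noncomputable section

/-- Hamming weight of a vector over `ZMod 2`. -/
def wt {m : ℕ} (v : Fin m → ZMod 2) : ℕ :=
  (Finset.univ.filter fun j => v j = 1).card

/-- `⊕M[Q]` : XOR (sum over `ZMod 2`) of the rows of `M` with index in `Q`. -/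
def xorRows {n m : ℕ} (M : Matrix (Fin n) (Fin m) (ZMod 2)) (Q : Finset (Fin n)) :
    Fin m → ZMod 2 :=
  fun j => ∑ i ∈ Q, M i j

/-- `M[F]` : restriction of `M` to the rows with index in `F`. -/
def rowRestrict {n m : ℕ} (F : Finset (Fin n)) (M : Matrix (Fin n) (Fin m) (ZMod 2)) :
    {x // x ∈ F} → Fin m → ZMod 2 :=
  fun i j => M i.1 j

/-- An access structure: a nonempty family of nonempty subsets of `Fin n`. -/
def IsAccessStructure {n : ℕ} (ΓQual : Finset (Finset (Fin n))) : Prop :=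
  ΓQual.Nonempty ∧ ∀ Q ∈ ΓQual, Q.Nonempty

/-- `Γ⁻` : minimal elements of `ΓQual` under inclusion. -/
def minQual {n : ℕ} (ΓQual : Finset (Finset (Fin n))) : Finset (Finset (Fin n)) :=
  ΓQual.filter fun Q => ∀ Q' ∈ ΓQual, Q' ⊆ Q → Q' = Q

/-- `Γ_Forb` : sets containing no minimal qualified set. -/
def Forb {n : ℕ} (ΓQual : Finset (Finset (Fin n))) (F : Finset (Fin n)) : Prop :=
  ∀ Q ∈ minQual ΓQual, ¬ Q ⊆ F

/-- XVCS: contrast + security (same matrices with same frequencies, after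
normalizing by the cardinalities). -/
def XVCS {n m : ℕ} (ΓQual : Finset (Finset (Fin n)))
    (C0 C1 : Multiset (Matrix (Fin n) (Fin m) (ZMod 2))) : Prop :=
  C0 ≠ 0 ∧ C1 ≠ 0 ∧
  (∀ Q ∈ ΓQual, ∀ M0 ∈ C0, ∀ M1 ∈ C1, wt (xorRows M0 Q) < wt (xorRows M1 Q)) ∧
  ∀ F : Finset (Fin n), Forb ΓQual F →
    ∀ D : {x // x ∈ F} → Fin m → ZMod 2,
      Multiset.card C1 * (C0.map (rowRestrict F)).count D
        = Multiset.card C0 * (C1.map (rowRestrict F)).count D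

/-- Static contrast condition of an SXVCS. -/
def StaticContrast {n m : ℕ} (ΓQual : Finset (Finset (Fin n)))
    (C0 C1 : Multiset (Matrix (Fin n) (Fin m) (ZMod 2))) : Prop :=
  ∀ Q ∈ ΓQual, ∃ E0 E1 : Fin m → ZMod 2,
    (∀ M ∈ C0, xorRows M Q = E0) ∧ (∀ M ∈ C1, xorRows M Q = E1) ∧ wt E0 < wt E1

/-- SXVCS : an XVCS satisfying the static contrast condition. -/
def SXVCS {n m : ℕ} (ΓQual : Finset (Finset (Fin n)))
    (C0 C1 : Multiset (Matrix (Fin n) (Fin m) (ZMod 2))) : Prop :=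
  XVCS ΓQual C0 C1 ∧ StaticContrast ΓQual C0 C1

/-- Perfect white pixel reconstruction. -/
def PerfectWhite {n m : ℕ} (ΓQual : Finset (Finset (Fin n)))
    (C0 : Multiset (Matrix (Fin n) (Fin m) (ZMod 2))) : Prop :=
  ∀ Q ∈ ΓQual, ∀ M ∈ C0, xorRows M Q = 0

/-- Average contrast of a scheme. -/
def avgContrast {n m : ℕ} (ΓQual : Finset (Finset (Fin n)))
    (C0 C1 : Multiset (Matrix (Fin n) (Fin m) (ZMod 2))) : ℚ :=
  (∑ Q ∈ ΓQual,
      ((C1.map fun M => (wt (xorRows M Q) : ℚ)).sum / (Multiset.card C1 : ℚ)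
        - (C0.map fun M => (wt (xorRows M Q) : ℚ)).sum / (Multiset.card C0 : ℚ)) / (m : ℚ))
    / (ΓQual.card : ℚ)

/-- PXVCS : probabilistic contrast condition + security. -/
def PXVCS {n m : ℕ} (ΓQual : Finset (Finset (Fin n)))
    (C0 C1 : Multiset (Matrix (Fin n) (Fin m) (ZMod 2))) : Prop :=
  C0 ≠ 0 ∧ C1 ≠ 0 ∧
  (∀ Q ∈ ΓQual,
    (C0.map fun M => (wt (xorRows M Q) : ℚ)).sum / (Multiset.card C0 : ℚ)
      < (C1.map fun M => (wt (xorRows M Q) : ℚ)).sum / (Multiset.card C1 : ℚ)) ∧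
  ∀ F : Finset (Fin n), Forb ΓQual F →
    ∀ D : {x // x ∈ F} → Fin m → ZMod 2,
      Multiset.card C1 * (C0.map (rowRestrict F)).count D
        = Multiset.card C0 * (C1.map (rowRestrict F)).count D

/-- Qualified matrix of an enumeration `Q : Fin t → Finset (Fin n)` of `ΓQual`. -/
def qualMatrix {t n : ℕ} (Q : Fin t → Finset (Fin n)) : Matrix (Fin t) (Fin n) (ZMod 2) :=
  fun k i => if i ∈ Q k then 1 else 0

/-- Solution set of `G * X = B` as a multiset (each solution once). -/
def solMS {t n m : ℕ} (G : Matrix (Fin t) (Fin n) (ZMod 2))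
    (B : Matrix (Fin t) (Fin m) (ZMod 2)) : Multiset (Matrix (Fin n) (Fin m) (ZMod 2)) :=
  (Finset.univ.filter fun X : Matrix (Fin n) (Fin m) (ZMod 2) => G * X = B).val

/-- Symmetric difference of a family: points in an odd number of members. -/
def symmDiffFam {n : ℕ} (S : Finset (Finset (Fin n))) : Finset (Fin n) :=
  Finset.univ.filter fun i => Odd (S.filter fun A => i ∈ A).card

/-- The `(k,n)` threshold qualified family. -/
def qualK (n k : ℕ) : Finset (Finset (Fin n)) :=
  Finset.univ.filter fun Q : Finset (Fin n) => Q.card = k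

/-- The `j`-th column of `M` as an `n × 1` matrix. -/
def colMat {n m : ℕ} (M : Matrix (Fin n) (Fin m) (ZMod 2)) (j : Fin m) :
    Matrix (Fin n) (Fin 1) (ZMod 2) := fun i _ => M i j

/-- Replace each matrix in `C` by the multiset of its columns. -/
def expandMS {n m : ℕ} (C : Multiset (Matrix (Fin n) (Fin m) (ZMod 2))) :
    Multiset (Matrix (Fin n) (Fin 1) (ZMod 2)) :=
  C.bind fun M => (Finset.univ.val : Multiset (Fin m)).map (colMat M)

lemma card_expandMS {n m : ℕ} (C : Multiset (Matrix (Fin n) (Fin m) (ZMod 2))) :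
    Multiset.card (expandMS C) = Multiset.card C * m := by
  rw [expandMS, Multiset.card_bind]
  simp only [Function.comp_def, Multiset.card_map, Finset.card_val, Finset.card_univ, Fintype.card_fin,
    Multiset.map_const', Multiset.sum_replicate, smul_eq_mul]

lemma wt_one (v : Fin 1 → ZMod 2) : wt v = if v 0 = 1 then 1 else 0 := by
  simp [wt, Finset.filter_singleton, Fin.isValue, show (Finset.univ : Finset (Fin 1)) = {0} from rfl]
  split <;> simp

lemma xorRows_colMat {n m : ℕ} (M : Matrix (Fin n) (Fin m) (ZMod 2)) (j : Fin m)
    (Q : Finset (Fin n)) (k : Fin 1) : xorRows (colMat M j) Q k = xorRows M Q j := rfl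

lemma sum_wt_expand {n m : ℕ} (Q : Finset (Fin n))
    (C : Multiset (Matrix (Fin n) (Fin m) (ZMod 2))) :
    ((expandMS C).map fun M => (wt (xorRows M Q) : ℚ)).sum
      = (C.map fun M => (wt (xorRows M Q) : ℚ)).sum := by
  rw [expandMS, Multiset.map_bind, Multiset.sum_bind]
  apply congrArg
  apply Multiset.map_congr rfl
  intro M _
  rw [Multiset.map_map]
  have : ∀ j : Fin m, (wt (xorRows (colMat M j) Q) : ℚ)
      = if xorRows M Q j = 1 then (1 : ℚ) else 0 := by
    intro j
    rw [wt_one, xorRows_colMat]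
    split <;> simp
  calc ((Finset.univ.val : Multiset (Fin m)).map
          fun j => (wt (xorRows (colMat M j) Q) : ℚ)).sum
      = ∑ j : Fin m, if xorRows M Q j = 1 then (1 : ℚ) else 0 := by
        rw [Finset.sum]
        exact congrArg _ (Multiset.map_congr rfl fun j _ => this j)
    _ = ((Finset.univ.filter fun j => xorRows M Q j = 1).card : ℚ) := by
        simp [Finset.sum_boole]
    _ = (wt (xorRows M Q) : ℚ) := by rw [wt]

lemma count_map_expand {n m : ℕ} (F : Finset (Fin n))
    (C : Multiset (Matrix (Fin n) (Fin m) (ZMod 2)))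
    (D : {x // x ∈ F} → Fin 1 → ZMod 2) :
    ((expandMS C).map (rowRestrict F)).count D
      = ∑ D' : {x // x ∈ F} → Fin m → ZMod 2,
          (C.map (rowRestrict F)).count D' *
            (Finset.univ.filter fun j : Fin m =>
              (fun i (_ : Fin 1) => D' i j) = D).card := by
  rw [expandMS, Multiset.map_bind, Multiset.count_bind]
  have h1 : ∀ M : Matrix (Fin n) (Fin m) (ZMod 2),
      (((Finset.univ.val : Multiset (Fin m)).map (colMat M)).map (rowRestrict F)).count D
        = (Finset.univ.filter fun j : Fin m =>
            (fun i (_ : Fin 1) => rowRestrict F M i j) = D).card := by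
    intro M
    rw [Multiset.map_map, Multiset.count_map]
    have he : Multiset.filter (fun a => D = (rowRestrict F ∘ colMat M) a)
          (Finset.univ.val : Multiset (Fin m))
        = Multiset.filter (fun j => (fun i (_ : Fin 1) => rowRestrict F M i j) = D)
          (Finset.univ.val : Multiset (Fin m)) := by
      apply Multiset.filter_congr
      intro j _
      exact ⟨fun h => h.symm, fun h => h.symm⟩
    rw [he]
    rfl
  rw [Multiset.map_congr rfl fun M _ => h1 M]
  have h2 : (C.map fun M => (Finset.univ.filter fun j : Fin m =>
        (fun i (_ : Fin 1) => rowRestrict F M i j) = D).card)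
      = (C.map (rowRestrict F)).map (fun D' => (Finset.univ.filter fun j : Fin m =>
        (fun i (_ : Fin 1) => D' i j) = D).card) := by
    rw [Multiset.map_map]
    rfl
  rw [h2, Finset.sum_multiset_map_count]
  refine (Finset.sum_subset (Finset.subset_univ _) ?_).trans ?_
  · intro x _ hx
    rw [Multiset.count_eq_zero.mpr (fun hc => hx (Multiset.mem_toFinset.mpr hc)), zero_smul]
  · exact Finset.sum_congr rfl fun x _ => smul_eq_mul ..

/-- from an SXVCS with pixel expansion `m` and average contrast
`α` one obtains a PXVCS with pixel expansion 1 and average contrast `α`. -/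
theorem stmt15 {n m : ℕ} (ΓQual : Finset (Finset (Fin n)))
    (hA : IsAccessStructure ΓQual) (α : ℚ)
    (h : ∃ C0 C1 : Multiset (Matrix (Fin n) (Fin m) (ZMod 2)),
      SXVCS ΓQual C0 C1 ∧ avgContrast ΓQual C0 C1 = α) :
    ∃ C0 C1 : Multiset (Matrix (Fin n) (Fin 1) (ZMod 2)),
      PXVCS ΓQual C0 C1 ∧ avgContrast ΓQual C0 C1 = α := by
  obtain ⟨C0, C1, ⟨⟨hC0, hC1, hcon, hsec⟩, hstat⟩, hα⟩ := h
  obtain ⟨Q0, hQ0⟩ := hA.1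
  obtain ⟨M0, hM0⟩ := Multiset.exists_mem_of_ne_zero hC0
  obtain ⟨M1, hM1⟩ := Multiset.exists_mem_of_ne_zero hC1
  have hm : 0 < m := by
    have hlt := hcon Q0 hQ0 M0 hM0 M1 hM1
    have h2 : wt (xorRows M1 Q0) ≤ m := by
      refine le_trans (Finset.card_filter_le _ _) (by simp)
    omega
  have hc0 : 0 < Multiset.card C0 := Multiset.card_pos.mpr hC0
  have hc1 : 0 < Multiset.card C1 := Multiset.card_pos.mpr hC1
  have hc0q : (0 : ℚ) < (Multiset.card C0 : ℚ) := by exact_mod_cast hc0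
  have hc1q : (0 : ℚ) < (Multiset.card C1 : ℚ) := by exact_mod_cast hc1
  have hmq : (0 : ℚ) < (m : ℚ) := by exact_mod_cast hm
  have hsum : ∀ (Q : Finset (Fin n)) (C : Multiset (Matrix (Fin n) (Fin m) (ZMod 2)))
      (E : Fin m → ZMod 2), (∀ M ∈ C, xorRows M Q = E) →
      (C.map fun M => (wt (xorRows M Q) : ℚ)).sum = (Multiset.card C : ℚ) * (wt E : ℚ) := by
    intro Q C E hE
    rw [Multiset.map_congr rfl fun M hM => by rw [hE M hM]]
    simp [Multiset.map_const', mul_comm]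
  refine ⟨expandMS C0, expandMS C1, ⟨?_, ?_, ?_, ?_⟩, ?_⟩
  · rw [← Multiset.card_pos, card_expandMS]; positivity
  · rw [← Multiset.card_pos, card_expandMS]; positivity
  · intro Q hQ
    obtain ⟨E0, E1, hE0, hE1, hlt⟩ := hstat Q hQ
    rw [sum_wt_expand, sum_wt_expand, card_expandMS, card_expandMS,
      hsum Q C0 E0 hE0, hsum Q C1 E1 hE1]
    push_cast
    rw [mul_div_mul_left _ _ (ne_of_gt hc0q), mul_div_mul_left _ _ (ne_of_gt hc1q)]
    rw [div_lt_div_iff_of_pos_right hmq]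
    exact_mod_cast hlt
  · intro F hF D
    rw [count_map_expand, count_map_expand, card_expandMS, card_expandMS,
      Finset.mul_sum, Finset.mul_sum]
    refine Finset.sum_congr rfl fun D' _ => ?_
    have h := hsec F hF D'
    calc (Multiset.card C1 * m) * ((C0.map (rowRestrict F)).count D' *
            (Finset.univ.filter fun j : Fin m => (fun i (_ : Fin 1) => D' i j) = D).card)
        = (Multiset.card C1 * (C0.map (rowRestrict F)).count D') *
            (m * (Finset.univ.filter fun j : Fin m => (fun i (_ : Fin 1) => D' i j) = D).card) := by
          ring
      _ = (Multiset.card C0 * (C1.map (rowRestrict F)).count D') *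
            (m * (Finset.univ.filter fun j : Fin m => (fun i (_ : Fin 1) => D' i j) = D).card) := by
          rw [h]
      _ = (Multiset.card C0 * m) * ((C1.map (rowRestrict F)).count D' *
            (Finset.univ.filter fun j : Fin m => (fun i (_ : Fin 1) => D' i j) = D).card) := by
          ring
  · rw [← hα]
    unfold avgContrast
    congr 1
    refine Finset.sum_congr rfl fun Q hQ => ?_
    rw [sum_wt_expand, sum_wt_expand, card_expandMS, card_expandMS]
    push_cast
    rw [div_one, ← div_div, ← div_div, sub_div]
end
end

section
/- For all natural numbers k, n with 3 ≤ k < n, there is no SXVCS for the (k,n) access structure, i.e. the access structure on Fin n with Γ_Qual = {Q ⊆ Fin n : |Q| = k} and Γ_Forb = {F ⊆ Fin n : |F| < k}. -/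
open scoped Classical

noncomputable section

lemma xorRows_symmDiff {n m : ℕ} (M : Matrix (Fin n) (Fin m) (ZMod 2)) (A B : Finset (Fin n)) :
    xorRows M A + xorRows M B = xorRows M (symmDiff A B) := by
  funext j
  have h1 : (∑ i ∈ A, M i j) + (∑ i ∈ B, M i j)
      = (∑ i ∈ A ∪ B, M i j) + (∑ i ∈ A ∩ B, M i j) :=
    (Finset.sum_union_inter).symm
  have h2 : A ∪ B = (symmDiff A B) ∪ (A ∩ B) := by
    ext i; simp [Finset.mem_symmDiff]; tauto
  have h3 : Disjoint (symmDiff A B) (A ∩ B) := by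
    rw [Finset.disjoint_left]; intro i hi hi'
    simp [Finset.mem_symmDiff] at hi; simp at hi'; tauto
  have h4 : (∑ i ∈ A ∪ B, M i j) = (∑ i ∈ symmDiff A B, M i j) + (∑ i ∈ A ∩ B, M i j) := by
    rw [h2, Finset.sum_union h3]
  show (∑ i ∈ A, M i j) + (∑ i ∈ B, M i j) = ∑ i ∈ symmDiff A B, M i j
  rw [h1, h4, add_assoc, CharTwo.add_self_eq_zero, add_zero]

lemma xorRows_of_rowRestrict_eq {n m : ℕ} {F : Finset (Fin n)}
    {M0 M1 : Matrix (Fin n) (Fin m) (ZMod 2)}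
    (h : rowRestrict F M0 = rowRestrict F M1) : xorRows M0 F = xorRows M1 F := by
  funext j
  show (∑ i ∈ F, M0 i j) = ∑ i ∈ F, M1 i j
  rw [← Finset.sum_attach F (fun i => M0 i j), ← Finset.sum_attach F (fun i => M1 i j)]
  exact Finset.sum_congr rfl fun i _ => congrFun (congrFun h i) j

lemma exists_common_xor {n m : ℕ} {C0 C1 : Multiset (Matrix (Fin n) (Fin m) (ZMod 2))}
    (hC0 : C0 ≠ 0) (hC1 : C1 ≠ 0) (F : Finset (Fin n))
    (hsec : ∀ D : {x // x ∈ F} → Fin m → ZMod 2,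
      Multiset.card C1 * (C0.map (rowRestrict F)).count D
        = Multiset.card C0 * (C1.map (rowRestrict F)).count D) :
    ∃ M0 ∈ C0, ∃ M1 ∈ C1, xorRows M0 F = xorRows M1 F := by
  obtain ⟨M0, hM0⟩ := Multiset.exists_mem_of_ne_zero hC0
  have hsecF := hsec (rowRestrict F M0)
  have hc0 : 0 < (C0.map (rowRestrict F)).count (rowRestrict F M0) :=
    Multiset.count_pos.mpr (Multiset.mem_map_of_mem _ hM0)
  have hc1card : 0 < Multiset.card C1 := Multiset.card_pos.mpr hC1
  have hpos0 : 0 < Multiset.card C0 * (C1.map (rowRestrict F)).count (rowRestrict F M0) := by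
    rw [← hsecF]; exact Nat.mul_pos hc1card hc0
  have hpos : 0 < (C1.map (rowRestrict F)).count (rowRestrict F M0) :=
    Nat.pos_of_ne_zero fun h => by simp [h] at hpos0
  obtain ⟨M1, hM1, hEq⟩ := Multiset.mem_map.mp (Multiset.count_pos.mp hpos)
  exact ⟨M0, hM0, M1, hM1, xorRows_of_rowRestrict_eq hEq.symm⟩

theorem stmt16' (k n : ℕ) (hk : 3 ≤ k) (hkn : k < n) :
    ¬ ∃ (m : ℕ) (C0 C1 : Multiset (Matrix (Fin n) (Fin m) (ZMod 2))),
        SXVCS (qualK n k) C0 C1 := by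
  rintro ⟨m, C0, C1, ⟨hC0, hC1, _, hsec⟩, hstat⟩
  have h1n : k - 1 < n := by omega
  have h2n : k - 2 < n := by omega
  set b : Fin n := ⟨k, hkn⟩ with hb
  set a1 : Fin n := ⟨k - 1, h1n⟩ with ha1
  set a2 : Fin n := ⟨k - 2, h2n⟩ with ha2
  set Q1 : Finset (Fin n) := Finset.Iio b with hQ1
  set Q2 : Finset (Fin n) := Finset.univ.filter (fun i => i.val < k - 1 ∨ i.val = k) with hQ2
  set Q3 : Finset (Fin n) :=
    Finset.univ.filter (fun i => i.val < k - 2 ∨ i.val = k - 1 ∨ i.val = k) with hQ3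
  set F2 : Finset (Fin n) := {a1, b} with hF2
  set F3 : Finset (Fin n) := Finset.Iio a2 with hF3
  -- cardinalities
  have hcQ1 : Q1.card = k := by rw [hQ1, Fin.card_Iio]
  have hQ2eq : Q2 = insert b (Q1.erase a1) := by
    ext i
    simp [hQ2, hQ1, ha1, hb, Fin.ext_iff, Fin.lt_def, Finset.mem_insert, Finset.mem_erase]
    omega
  have hQ3eq : Q3 = insert b (Q1.erase a2) := by
    ext i
    simp [hQ3, hQ1, ha2, hb, Fin.ext_iff, Fin.lt_def, Finset.mem_insert, Finset.mem_erase]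
    omega
  have ha1Q1 : a1 ∈ Q1 := by simp [hQ1, ha1, hb, Fin.lt_def]; omega
  have ha2Q1 : a2 ∈ Q1 := by simp [hQ1, ha2, hb, Fin.lt_def]; omega
  have hbQ1 : b ∉ Q1 := by simp [hQ1]
  have hcQ2 : Q2.card = k := by
    rw [hQ2eq, Finset.card_insert_of_notMem (fun h => hbQ1 (Finset.mem_of_mem_erase h)),
      Finset.card_erase_of_mem ha1Q1, hcQ1]
    omega
  have hcQ3 : Q3.card = k := by
    rw [hQ3eq, Finset.card_insert_of_notMem (fun h => hbQ1 (Finset.mem_of_mem_erase h)),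
      Finset.card_erase_of_mem ha2Q1, hcQ1]
    omega
  have hQ1mem : Q1 ∈ qualK n k := Finset.mem_filter.mpr ⟨Finset.mem_univ _, hcQ1⟩
  have hQ2mem : Q2 ∈ qualK n k := Finset.mem_filter.mpr ⟨Finset.mem_univ _, hcQ2⟩
  have hQ3mem : Q3 ∈ qualK n k := Finset.mem_filter.mpr ⟨Finset.mem_univ _, hcQ3⟩
  -- symmetric differences
  have hsd2 : symmDiff Q1 Q2 = F2 := by
    ext i
    simp [Finset.mem_symmDiff, hQ1, hQ2, hF2, ha1, hb, Fin.ext_iff, Fin.lt_def,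
      Finset.mem_insert]
    omega
  have hsd3 : symmDiff (symmDiff Q1 Q2) Q3 = F3 := by
    rw [hsd2]
    ext i
    simp [Finset.mem_symmDiff, hQ3, hF2, hF3, ha1, ha2, hb, Fin.ext_iff, Fin.lt_def,
      Finset.mem_insert]
    omega
  -- forbidden sets
  have forb_of_lt : ∀ F : Finset (Fin n), F.card < k → Forb (qualK n k) F := by
    intro F hF Q hQ hsub
    have hQ' : Q ∈ qualK n k := (Finset.mem_filter.mp hQ).1
    have hcard : Q.card = k := (Finset.mem_filter.mp hQ').2
    have := Finset.card_le_card hsub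
    omega
  have hF2forb : Forb (qualK n k) F2 := by
    apply forb_of_lt
    calc F2.card ≤ 2 := by
          rw [hF2]; exact (Finset.card_insert_le _ _).trans (by simp)
      _ < k := by omega
  have hF3forb : Forb (qualK n k) F3 := by
    apply forb_of_lt
    rw [hF3, Fin.card_Iio]
    show k - 2 < k
    omega
  -- static contrast data
  obtain ⟨E01, E11, h01, h11, hlt1⟩ := hstat Q1 hQ1mem
  obtain ⟨E02, E12, h02, h12, hlt2⟩ := hstat Q2 hQ2mem
  obtain ⟨E03, E13, h03, h13, hlt3⟩ := hstat Q3 hQ3mem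
  -- pair equation
  obtain ⟨M0, hM0, M1, hM1, hxor2⟩ := exists_common_xor hC0 hC1 F2 (hsec F2 hF2forb)
  have hpair : E01 + E02 = E11 + E12 := by
    have e0 : E01 + E02 = xorRows M0 F2 := by
      rw [← h01 M0 hM0, ← h02 M0 hM0, xorRows_symmDiff, hsd2]
    have e1 : E11 + E12 = xorRows M1 F2 := by
      rw [← h11 M1 hM1, ← h12 M1 hM1, xorRows_symmDiff, hsd2]
    rw [e0, e1, hxor2]
  -- triple equation
  obtain ⟨N0, hN0, N1, hN1, hxor3⟩ := exists_common_xor hC0 hC1 F3 (hsec F3 hF3forb)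
  have htrip : (E01 + E02) + E03 = (E11 + E12) + E13 := by
    have e0 : (E01 + E02) + E03 = xorRows N0 F3 := by
      rw [← h01 N0 hN0, ← h02 N0 hN0, ← h03 N0 hN0, xorRows_symmDiff, xorRows_symmDiff, hsd3]
    have e1 : (E11 + E12) + E13 = xorRows N1 F3 := by
      rw [← h11 N1 hN1, ← h12 N1 hN1, ← h13 N1 hN1, xorRows_symmDiff, xorRows_symmDiff, hsd3]
    rw [e0, e1, hxor3]
  rw [hpair] at htrip
  have hE : E03 = E13 := add_left_cancel htrip
  rw [hE] at hlt3
  exact lt_irrefl _ hlt3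

/-- no `(k,n)`-SXVCS exists for `3 ≤ k < n`. -/
theorem stmt16 (k n : ℕ) (hk : 3 ≤ k) (hkn : k < n) :
    ¬ ∃ (m : ℕ) (C0 C1 : Multiset (Matrix (Fin n) (Fin m) (ZMod 2))),
        SXVCS (qualK n k) C0 C1 := by
  exact stmt16' k n hk hkn
end
end

section
/- For every n ≥ 2 there exists an SXVCS for the (2,n) access structure with pixel expansion m = ⌈log₂ n⌉ (Lean: Nat.clog 2 n) and average contrast equal to ⌊n/2⌋ · ⌊(n+1)/2⌋ / (n(n−1)/2). -/
open scoped Classical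

noncomputable section

def bcond (k i : ℕ) : ZMod 2 := (if Nat.testBit (i/2) k then (1:ZMod 2) else 0) + ((i % 2 : ℕ) : ZMod 2)

lemma bcond_even (k j : ℕ) : bcond k (2*j) = (if Nat.testBit j k then (1:ZMod 2) else 0) := by
  simp [bcond, Nat.mul_div_cancel_left, Nat.mul_mod_right]

lemma bcond_odd (k j : ℕ) : bcond k (2*j+1) = (if Nat.testBit j k then (1:ZMod 2) else 0) + 1 := by
  have h1 : (2*j+1)/2 = j := by omega
  have h2 : (2*j+1)%2 = 1 := by omega
  simp [bcond, h1, h2]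

lemma count_succ (p : ℕ → Prop) [DecidablePred p] (n : ℕ) :
    ((Finset.range (n+1)).filter p).card
      = ((Finset.range n).filter p).card + if p n then 1 else 0 := by
  rw [Finset.range_add_one, Finset.filter_insert]
  split
  · rw [Finset.card_insert_of_notMem (fun hm => by
      have := Finset.mem_range.mp (Finset.mem_of_mem_filter _ hm); omega)]
  · omega

lemma count_even (k j : ℕ) : ((Finset.range (2*j)).filter fun i => bcond k i = 1).card = j := by
  induction j with
  | zero => simp
  | succ j ih =>
    rw [show 2*(j+1) = (2*j+1)+1 by ring, count_succ, count_succ, ih, bcond_even, bcond_odd]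
    by_cases h : Nat.testBit j k
    · rw [if_pos h, if_pos rfl, if_neg (by decide)]
    · rw [if_neg h, if_neg (by decide), if_pos (by decide)]

lemma count_range (k n : ℕ) :
    ((Finset.range n).filter fun i => bcond k i = 1).card
      = n/2 + (if n % 2 = 1 ∧ Nat.testBit (n/2) k then 1 else 0) := by
  rcases Nat.even_or_odd n with ⟨j, hj⟩ | ⟨j, hj⟩ <;> subst hj
  · rw [show j + j = 2*j by ring, count_even, if_neg (by omega), Nat.add_zero,
      Nat.mul_div_cancel_left _ (by norm_num)]
  · rw [count_succ, count_even, bcond_even, show (2*j+1)/2 = j by omega,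
      show (2*j+1)%2 = 1 by omega]
    by_cases h : Nat.testBit j k
    · rw [if_pos h, if_pos rfl, if_pos ⟨rfl, h⟩]
    · rw [if_neg h, if_neg (by decide), if_neg (by tauto)]

lemma prod_eq (k n : ℕ) :
    ((Finset.range n).filter fun i => bcond k i = 1).card
      * (n - ((Finset.range n).filter fun i => bcond k i = 1).card)
      = n/2 * ((n+1)/2) := by
  rw [count_range]
  rcases Nat.even_or_odd n with ⟨j, hj⟩ | ⟨j, hj⟩ <;> subst hj
  · rw [show j + j = 2*j by ring, if_neg (by omega), Nat.add_zero,
      Nat.mul_div_cancel_left _ (by norm_num), show (2*j+1)/2 = j by omega,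
      show 2*j - j = j by omega]
  · rw [show (2*j+1)%2 = 1 by omega, show (2*j+1)/2 = j by omega,
      show (2*j+1+1)/2 = j+1 by omega]
    by_cases h : Nat.testBit j k
    · rw [if_pos ⟨rfl, h⟩, show 2*j+1 - (j+1) = j by omega]; ring
    · rw [if_neg (by tauto), Nat.add_zero, show 2*j+1 - j = j+1 by omega]

def bvec (n : ℕ) (i : Fin n) : Fin (Nat.clog 2 n) → ZMod 2 := fun k => bcond k.1 i.1

lemma bvec_inj {n : ℕ} (hn : 2 ≤ n) : Function.Injective (bvec n) := by
  have hm : 0 < Nat.clog 2 n := Nat.clog_pos (by norm_num) hn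
  have hpow : n ≤ 2 ^ Nat.clog 2 n := Nat.le_pow_clog (by norm_num) n
  set m := Nat.clog 2 n with hmdef
  intro i i' h
  have hb : ∀ k : Fin m, bcond k.1 i.1 = bcond k.1 i'.1 := fun k => congrFun h k
  by_cases hmod : i.1 % 2 = i'.1 % 2
  · have hbit : ∀ k : ℕ, Nat.testBit (i.1/2) k = Nat.testBit (i'.1/2) k := by
      intro k
      by_cases hk : k < m
      · have := hb ⟨k, hk⟩
        simp only [bcond, hmod] at this
        have h2 : (if Nat.testBit (i.1/2) k then (1:ZMod 2) else 0)
            = (if Nat.testBit (i'.1/2) k then (1:ZMod 2) else 0) := by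
          exact add_right_cancel this
        by_cases b1 : Nat.testBit (i.1/2) k <;> by_cases b2 : Nat.testBit (i'.1/2) k <;>
          simp [b1, b2] at h2 ⊢
      · have hlt : ∀ x : ℕ, x < n → Nat.testBit (x/2) k = false := by
          intro x hx
          apply Nat.testBit_eq_false_of_lt
          have : x < 2 ^ k := lt_of_lt_of_le (lt_of_lt_of_le hx hpow)
            (Nat.pow_le_pow_right (by norm_num) (by omega))
          omega
        rw [hlt _ i.2, hlt _ i'.2]
    have hdiv : i.1 / 2 = i'.1 / 2 := Nat.eq_of_testBit_eq hbit
    exact Fin.ext (by omega)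
  · exfalso
    have hk : m - 1 < m := by omega
    have := hb ⟨m-1, hk⟩
    have hbit : ∀ x : ℕ, x < n → Nat.testBit (x/2) (m-1) = false := by
      intro x hx
      apply Nat.testBit_eq_false_of_lt
      have h2m : 2 ^ m = 2 ^ (m-1) * 2 := by
        rw [← pow_succ]; congr 1; omega
      have : x < 2 ^ (m-1) * 2 := by omega
      omega
    simp only [bcond, hbit _ i.2, hbit _ i'.2, if_neg Bool.false_ne_true, zero_add] at this
    rcases Nat.mod_two_eq_zero_or_one i.1 with h1 | h1 <;>
      rcases Nat.mod_two_eq_zero_or_one i'.1 with h2 | h2 <;>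
      rw [h1, h2] at this hmod <;> simp at this hmod <;> exact absurd this (by decide)

lemma col_count {n : ℕ} (k : Fin (Nat.clog 2 n)) :
    (Finset.univ.filter fun i : Fin n => bvec n i k = 1).card
      * (n - (Finset.univ.filter fun i : Fin n => bvec n i k = 1).card)
      = n/2 * ((n+1)/2) := by
  have hcard : (Finset.univ.filter fun i : Fin n => bvec n i k = 1).card
      = ((Finset.range n).filter fun i => bcond k.1 i = 1).card := by
    rw [Finset.card_filter, Finset.card_filter,
      ← Fin.sum_univ_eq_sum_range (fun i => if bcond k.1 i = 1 then 1 else 0)]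
    rfl
  rw [hcard]
  exact prod_eq k.1 n

def mat0 (n : ℕ) (r : Fin (Nat.clog 2 n) → ZMod 2) :
    Matrix (Fin n) (Fin (Nat.clog 2 n)) (ZMod 2) := fun _ j => r j

def mat1 (n : ℕ) (r : Fin (Nat.clog 2 n) → ZMod 2) :
    Matrix (Fin n) (Fin (Nat.clog 2 n)) (ZMod 2) := fun i j => bvec n i j + r j

def Cw (n : ℕ) : Multiset (Matrix (Fin n) (Fin (Nat.clog 2 n)) (ZMod 2)) :=
  Finset.univ.val.map (mat0 n)

def Cb (n : ℕ) : Multiset (Matrix (Fin n) (Fin (Nat.clog 2 n)) (ZMod 2)) :=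
  Finset.univ.val.map (mat1 n)

def Esig (n : ℕ) (Q : Finset (Fin n)) : Fin (Nat.clog 2 n) → ZMod 2 :=
  fun k => ∑ i ∈ Q, bvec n i k

lemma xor0 {n : ℕ} (Q : Finset (Fin n)) (hQ : Q.card = 2) (r : Fin (Nat.clog 2 n) → ZMod 2) :
    xorRows (mat0 n r) Q = 0 := by
  funext j
  show ∑ _i ∈ Q, r j = 0
  rw [Finset.sum_const, hQ, two_smul]
  exact CharTwo.add_self_eq_zero (r j)

lemma xor1 {n : ℕ} (Q : Finset (Fin n)) (hQ : Q.card = 2) (r : Fin (Nat.clog 2 n) → ZMod 2) :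
    xorRows (mat1 n r) Q = Esig n Q := by
  funext j
  show ∑ i ∈ Q, (bvec n i j + r j) = ∑ i ∈ Q, bvec n i j
  rw [Finset.sum_add_distrib, Finset.sum_const, hQ, two_smul,
    CharTwo.add_self_eq_zero (r j), add_zero]

lemma restrict_eq {n : ℕ} (hn : 2 ≤ n) (F : Finset (Fin n)) (hF : F.card ≤ 1) :
    (Cw n).map (rowRestrict F) = (Cb n).map (rowRestrict F) := by
  have : Nonempty (Fin n) := ⟨⟨0, by omega⟩⟩
  obtain ⟨a, ha⟩ := Finset.card_le_one_iff_subset_singleton.mp hF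
  rw [Cw, Cb, Multiset.map_map, Multiset.map_map]
  rcases Finset.subset_singleton_iff.mp ha with rfl | rfl
  · apply Multiset.map_congr rfl
    intro r _
    funext x j
    exact absurd x.2 (Finset.notMem_empty x.1)
  · have huniv : Finset.univ.val.map (Equiv.addLeft (bvec n a)) = Finset.univ.val := by
      calc Finset.univ.val.map (Equiv.addLeft (bvec n a))
          = (Finset.univ.map (Equiv.addLeft (bvec n a)).toEmbedding).val := rfl
        _ = Finset.univ.val := by rw [Finset.map_univ_equiv]
    calc Multiset.map (rowRestrict {a} ∘ mat0 n) Finset.univ.val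
        = Multiset.map (rowRestrict {a} ∘ mat0 n)
            (Finset.univ.val.map (Equiv.addLeft (bvec n a))) := by rw [huniv]
      _ = Multiset.map ((rowRestrict {a} ∘ mat0 n) ∘ (Equiv.addLeft (bvec n a)))
            Finset.univ.val := Multiset.map_map _ _ _
      _ = Multiset.map (rowRestrict {a} ∘ mat1 n) Finset.univ.val := by
            apply Multiset.map_congr rfl
            intro r _
            funext x j
            have hx : x.1 = a := Finset.mem_singleton.mp x.2
            show (bvec n a + r) j = bvec n x.1 j + r j
            rw [hx]; rfl

lemma card_Cw (n : ℕ) : Multiset.card (Cw n)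
    = Fintype.card (Fin (Nat.clog 2 n) → ZMod 2) := by
  rw [Cw, Multiset.card_map]; rfl

lemma card_Cb (n : ℕ) : Multiset.card (Cb n)
    = Fintype.card (Fin (Nat.clog 2 n) → ZMod 2) := by
  rw [Cb, Multiset.card_map]; rfl

lemma wt_zero {m : ℕ} : wt (0 : Fin m → ZMod 2) = 0 := by
  rw [wt, Finset.card_eq_zero, Finset.filter_eq_empty_iff]
  intro j _
  exact (by decide : (0 : ZMod 2) ≠ 1)

lemma mem_qualK {n : ℕ} (Q : Finset (Fin n)) : Q ∈ qualK n 2 ↔ Q.card = 2 := by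
  simp [qualK]

lemma Esig_pair {n : ℕ} (a b : Fin n) (hab : a ≠ b) :
    Esig n {a, b} = fun k => bvec n a k + bvec n b k := by
  funext k
  exact Finset.sum_pair hab

lemma wt_pair_pos {n : ℕ} (hn : 2 ≤ n) (a b : Fin n) (hab : a ≠ b) :
    0 < wt (fun k => bvec n a k + bvec n b k) := by
  have hne : bvec n a ≠ bvec n b := fun h => hab (bvec_inj hn h)
  obtain ⟨k, hk⟩ := Function.ne_iff.mp hne
  rw [wt, Finset.card_pos]
  refine ⟨k, Finset.mem_filter.mpr ⟨Finset.mem_univ _, ?_⟩⟩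
  revert hk
  generalize bvec n a k = x
  generalize bvec n b k = y
  revert x y
  decide

lemma card_qualK {n : ℕ} : (qualK n 2).card = n * (n-1) / 2 := by
  have h : qualK n 2 = Finset.powersetCard 2 (Finset.univ : Finset (Fin n)) := by
    rw [Finset.powersetCard_eq_filter, qualK, Finset.powerset_univ]
  rw [h, Finset.card_powersetCard, Finset.card_univ, Fintype.card_fin, Nat.choose_two_right]

lemma sum_qualK {n : ℕ} (hn : 2 ≤ n) :
    ∑ Q ∈ qualK n 2, wt (Esig n Q) = Nat.clog 2 n * (n/2 * ((n+1)/2)) := by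
  set m := Nat.clog 2 n with hm
  set S : Finset (Fin n × Fin n) := Finset.univ.filter fun p => p.1 ≠ p.2 with hS
  set f : Fin n × Fin n → Finset (Fin n) := fun p => {p.1, p.2} with hf
  have h_image : S.image f = qualK n 2 := by
    ext Q
    constructor
    · intro hQ
      obtain ⟨p, hp, rfl⟩ := Finset.mem_image.mp hQ
      have hne : p.1 ≠ p.2 := (Finset.mem_filter.mp hp).2
      exact (mem_qualK _).mpr (Finset.card_pair hne)
    · intro hQ
      obtain ⟨a, b, hab, rfl⟩ := Finset.card_eq_two.mp ((mem_qualK _).mp hQ)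
      exact Finset.mem_image.mpr ⟨(a, b), Finset.mem_filter.mpr ⟨Finset.mem_univ _, hab⟩, rfl⟩
  have h_fiber : ∀ Q ∈ qualK n 2, (S.filter fun p => f p = Q).card = 2 := by
    intro Q hQ
    obtain ⟨a, b, hab, rfl⟩ := Finset.card_eq_two.mp ((mem_qualK _).mp hQ)
    have : (S.filter fun p => f p = {a, b}) = {(a, b), (b, a)} := by
      ext p
      simp only [Finset.mem_filter, Finset.mem_insert, Finset.mem_singleton, hS, hf,
        Finset.mem_univ, true_and]
      constructor
      · rintro ⟨hne, hpair⟩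
        have h1 : p.1 ∈ ({a, b} : Finset (Fin n)) := by
          rw [← hpair]; exact Finset.mem_insert_self _ _
        have h2 : p.2 ∈ ({a, b} : Finset (Fin n)) := by
          rw [← hpair]; exact Finset.mem_insert.mpr (Or.inr (Finset.mem_singleton_self _))
        rw [Finset.mem_insert, Finset.mem_singleton] at h1 h2
        rcases h1 with h1 | h1 <;> rcases h2 with h2 | h2
        · exact absurd (h1.trans h2.symm) hne
        · exact Or.inl (Prod.ext h1 h2)
        · exact Or.inr (Prod.ext h1 h2)
        · exact absurd (h1.trans h2.symm) hne
      · rintro (rfl | rfl)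
        · exact ⟨hab, rfl⟩
        · exact ⟨hab.symm, Finset.pair_comm _ _⟩
    rw [this, Finset.card_insert_of_notMem, Finset.card_singleton]
    rw [Finset.mem_singleton]
    intro h
    exact hab (congrArg Prod.fst h)
  have h_comp := Finset.sum_comp (fun Q => wt (Esig n Q)) f (s := S)
  rw [h_image] at h_comp
  have h_lhs : ∑ p ∈ S, wt (Esig n (f p)) = m * (2 * (n/2 * ((n+1)/2))) := by
    have step1 : ∑ p ∈ S, wt (Esig n (f p))
        = ∑ p ∈ S, ∑ k : Fin m, (if bvec n p.1 k + bvec n p.2 k = 1 then 1 else 0) := by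
      apply Finset.sum_congr rfl
      intro p hp
      have hne : p.1 ≠ p.2 := (Finset.mem_filter.mp hp).2
      rw [show f p = {p.1, p.2} from rfl, Esig_pair _ _ hne, wt, Finset.card_filter]
    rw [step1, Finset.sum_comm]
    have step2 : ∀ k : Fin m,
        (∑ p ∈ S, (if bvec n p.1 k + bvec n p.2 k = 1 then 1 else 0))
          = 2 * (n/2 * ((n+1)/2)) := by
      intro k
      rw [← Finset.card_filter]
      have hSf : (S.filter fun p => bvec n p.1 k + bvec n p.2 k = 1)
          = Finset.univ.filter fun p : Fin n × Fin n => bvec n p.1 k + bvec n p.2 k = 1 := by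
        rw [hS, Finset.filter_filter]
        apply Finset.filter_congr
        intro p _
        constructor
        · rintro ⟨_, h⟩; exact h
        · intro h
          refine ⟨?_, h⟩
          intro hpe
          rw [hpe, CharTwo.add_self_eq_zero] at h
          exact (by decide : (0 : ZMod 2) ≠ 1) h
      rw [hSf]
      have hsplit : (Finset.univ.filter fun p : Fin n × Fin n => bvec n p.1 k + bvec n p.2 k = 1)
          = ((Finset.univ ×ˢ Finset.univ).filter
              fun p : Fin n × Fin n => bvec n p.1 k = 1 ∧ bvec n p.2 k = 0)
            ∪ ((Finset.univ ×ˢ Finset.univ).filter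
              fun p : Fin n × Fin n => bvec n p.1 k = 0 ∧ bvec n p.2 k = 1) := by
        rw [← Finset.filter_or, Finset.univ_product_univ]
        apply Finset.filter_congr
        intro p _
        generalize bvec n p.1 k = x
        generalize bvec n p.2 k = y
        revert x y
        decide
      have hdisj : Disjoint
          ((Finset.univ ×ˢ Finset.univ).filter
              fun p : Fin n × Fin n => bvec n p.1 k = 1 ∧ bvec n p.2 k = 0)
          ((Finset.univ ×ˢ Finset.univ).filter
              fun p : Fin n × Fin n => bvec n p.1 k = 0 ∧ bvec n p.2 k = 1) := by
        rw [Finset.disjoint_left]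
        intro p hp1 hp2
        have h1 := (Finset.mem_filter.mp hp1).2.1
        have h2 := (Finset.mem_filter.mp hp2).2.1
        rw [h1] at h2
        exact (by decide : (1 : ZMod 2) ≠ 0) h2
      have hfp1 := Finset.filter_product (s := (Finset.univ : Finset (Fin n)))
        (t := (Finset.univ : Finset (Fin n)))
        (p := fun a : Fin n => bvec n a k = 1) (q := fun a : Fin n => bvec n a k = 0)
      have hfp2 := Finset.filter_product (s := (Finset.univ : Finset (Fin n)))
        (t := (Finset.univ : Finset (Fin n)))
        (p := fun a : Fin n => bvec n a k = 0) (q := fun a : Fin n => bvec n a k = 1)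
      rw [hsplit, Finset.card_union_of_disjoint hdisj,
        hfp1, hfp2, Finset.card_product, Finset.card_product]
      set c := (Finset.univ.filter fun i : Fin n => bvec n i k = 1).card with hc
      have hcompl : (Finset.univ.filter fun i : Fin n => bvec n i k = 0).card = n - c := by
        have h0 : (Finset.univ.filter fun i : Fin n => bvec n i k = 0)
            = Finset.univ.filter fun i : Fin n => ¬ (bvec n i k = 1) := by
          apply Finset.filter_congr
          intro i _
          generalize bvec n i k = x
          revert x
          decide
        have := Finset.card_filter_add_card_filter_not
          (s := (Finset.univ : Finset (Fin n))) (p := fun i => bvec n i k = 1)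
        rw [Finset.card_univ, Fintype.card_fin] at this
        rw [h0]
        omega
      rw [hcompl]
      have := col_count k
      rw [← hc] at this
      rw [mul_comm (n - c) c] at *
      omega
    rw [Finset.sum_congr rfl (fun k _ => step2 k), Finset.sum_const, Finset.card_univ,
      Fintype.card_fin, smul_eq_mul]
  have h_rhs : ∑ Q ∈ qualK n 2, (S.filter fun p => f p = Q).card • wt (Esig n Q)
      = 2 * ∑ Q ∈ qualK n 2, wt (Esig n Q) := by
    rw [Finset.mul_sum]
    apply Finset.sum_congr rfl
    intro Q hQ
    rw [h_fiber Q hQ, smul_eq_mul]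
  rw [h_lhs, h_rhs] at h_comp
  have h2 : 2 * (m * (n/2*((n+1)/2))) = 2 * ∑ Q ∈ qualK n 2, wt (Esig n Q) := by
    rw [← h_comp]; ring
  exact (Nat.eq_of_mul_eq_mul_left (by norm_num) h2).symm

lemma forb_card {n : ℕ} (F : Finset (Fin n)) (hF : Forb (qualK n 2) F) : F.card ≤ 1 := by
  by_contra h
  push_neg at h
  obtain ⟨Q, hQF, hQ2⟩ := Finset.exists_subset_card_eq (show 2 ≤ F.card by omega)
  refine hF Q ?_ hQF
  rw [minQual, Finset.mem_filter]
  refine ⟨(mem_qualK Q).mpr hQ2, ?_⟩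
  intro Q' hQ' hsub
  exact Finset.eq_of_subset_of_card_le hsub
    (by rw [hQ2, (mem_qualK Q').mp hQ'])

/-- there is a `(2,n)`-SXVCS with pixel expansion `⌈log₂ n⌉`
and average contrast `⌊n/2⌋⌊(n+1)/2⌋ / (n(n−1)/2)`. -/
theorem stmt17 {n : ℕ} (hn : 2 ≤ n) :
    ∃ C0 C1 : Multiset (Matrix (Fin n) (Fin (Nat.clog 2 n)) (ZMod 2)),
      SXVCS (qualK n 2) C0 C1 ∧
      avgContrast (qualK n 2) C0 C1
        = ((n / 2 * ((n + 1) / 2) : ℕ) : ℚ) / ((n * (n - 1) / 2 : ℕ) : ℚ) := by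
  have hm : 0 < Nat.clog 2 n := Nat.clog_pos (by norm_num) hn
  set m := Nat.clog 2 n with hmdef
  have hNpos : 0 < Fintype.card (Fin m → ZMod 2) := Fintype.card_pos
  have hCw0 : Cw n ≠ 0 := by
    rw [← Multiset.card_pos, card_Cw]; exact hNpos
  have hCb0 : Cb n ≠ 0 := by
    rw [← Multiset.card_pos, card_Cb]; exact hNpos
  have hwtE : ∀ Q ∈ qualK n 2, 0 < wt (Esig n Q) := by
    intro Q hQ
    obtain ⟨a, b, hab, rfl⟩ := Finset.card_eq_two.mp ((mem_qualK Q).mp hQ)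
    rw [Esig_pair a b hab]
    exact wt_pair_pos hn a b hab
  refine ⟨Cw n, Cb n, ⟨⟨hCw0, hCb0, ?_, ?_⟩, ?_⟩, ?_⟩
  · -- contrast
    intro Q hQ M0 hM0 M1 hM1
    obtain ⟨r0, _, rfl⟩ := Multiset.mem_map.mp hM0
    obtain ⟨r1, _, rfl⟩ := Multiset.mem_map.mp hM1
    rw [xor0 Q ((mem_qualK Q).mp hQ) r0, xor1 Q ((mem_qualK Q).mp hQ) r1, wt_zero]
    exact hwtE Q hQ
  · -- security
    intro F hF D
    rw [restrict_eq hn F (forb_card F hF), card_Cw, card_Cb]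
  · -- static contrast
    intro Q hQ
    refine ⟨0, Esig n Q, ?_, ?_, ?_⟩
    · intro M hM
      obtain ⟨r, _, rfl⟩ := Multiset.mem_map.mp hM
      exact xor0 Q ((mem_qualK Q).mp hQ) r
    · intro M hM
      obtain ⟨r, _, rfl⟩ := Multiset.mem_map.mp hM
      exact xor1 Q ((mem_qualK Q).mp hQ) r
    · rw [wt_zero]; exact hwtE Q hQ
  · -- average contrast
    have hNq : ((Fintype.card (Fin m → ZMod 2) : ℚ)) ≠ 0 := by
      exact_mod_cast Nat.pos_iff_ne_zero.mp hNpos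
    have hmq : ((m : ℚ)) ≠ 0 := by exact_mod_cast Nat.pos_iff_ne_zero.mp hm
    have hsum0 : ∀ Q ∈ qualK n 2,
        ((Cw n).map fun M => (wt (xorRows M Q) : ℚ)).sum = 0 := by
      intro Q hQ
      rw [Cw, Multiset.map_map]
      have hcongr : Multiset.map ((fun M => (wt (xorRows M Q) : ℚ)) ∘ mat0 n)
          Finset.univ.val = Multiset.map (fun _ => (0 : ℚ)) Finset.univ.val :=
        Multiset.map_congr rfl (fun r _ => by
          show (wt (xorRows (mat0 n r) Q) : ℚ) = 0
          rw [xor0 Q ((mem_qualK Q).mp hQ) r, wt_zero, Nat.cast_zero])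
      rw [hcongr, Multiset.map_const', Multiset.sum_replicate, smul_zero]
    have hsum1 : ∀ Q ∈ qualK n 2,
        ((Cb n).map fun M => (wt (xorRows M Q) : ℚ)).sum
          = (Fintype.card (Fin m → ZMod 2) : ℚ) * (wt (Esig n Q) : ℚ) := by
      intro Q hQ
      rw [Cb, Multiset.map_map]
      have hcongr : Multiset.map ((fun M => (wt (xorRows M Q) : ℚ)) ∘ mat1 n)
          Finset.univ.val
            = Multiset.map (fun _ => ((wt (Esig n Q) : ℚ))) Finset.univ.val :=
        Multiset.map_congr rfl (fun r _ => by
          show (wt (xorRows (mat1 n r) Q) : ℚ) = _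
          rw [xor1 Q ((mem_qualK Q).mp hQ) r])
      rw [hcongr, Multiset.map_const', Multiset.sum_replicate, nsmul_eq_mul]
      congr 1
    rw [avgContrast]
    have hterm : ∀ Q ∈ qualK n 2,
        (((Cb n).map fun M => (wt (xorRows M Q) : ℚ)).sum / (Multiset.card (Cb n) : ℚ)
          - ((Cw n).map fun M => (wt (xorRows M Q) : ℚ)).sum
              / (Multiset.card (Cw n) : ℚ)) / (m : ℚ)
          = (wt (Esig n Q) : ℚ) / (m : ℚ) := by
      intro Q hQ
      rw [hsum0 Q hQ, hsum1 Q hQ, card_Cb, zero_div, sub_zero,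
        mul_comm, mul_div_assoc, div_self hNq, mul_one]
    rw [Finset.sum_congr rfl hterm, ← Finset.sum_div]
    have hcast : ∑ Q ∈ qualK n 2, (wt (Esig n Q) : ℚ)
        = ((m * (n/2 * ((n+1)/2)) : ℕ) : ℚ) := by
      rw [← Nat.cast_sum]
      exact_mod_cast congrArg (Nat.cast (R := ℚ)) (sum_qualK hn)
    rw [hcast, card_qualK, Nat.cast_mul, mul_comm ((m : ℕ) : ℚ), mul_div_assoc,
      div_self hmq, mul_one]
end
end

section
/- For every n ≥ 2, with m := ⌈log₂ n⌉ (Lean: Nat.clog 2 n), there exists a matrix B : Matrix (Fin (n−1)) (Fin m) (ZMod 2) such that: (1) for every pair of indices l ≤ h in Fin (n−1), the XOR of rows l, l+1, …, h of B is a nonzero vector; and (2) for every column c, the number of pairs l ≤ h in Fin (n−1) for which the sum over ZMod 2 of the entries B l c, B (l+1) c, …, B h c equals 1 is exactly ⌊n/2⌋ · ⌊(n+1)/2⌋. -/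
open scoped Classical

noncomputable section

private lemma tele2 (f : ℕ → ZMod 2) {a b : ℕ} (hab : a ≤ b) :
    ∑ i ∈ Finset.Icc a b, (f (i+1) + f i) = f (b+1) + f a := by
  induction b, hab using Nat.le_induction with
  | base => simp
  | succ b hab ih =>
    rw [Finset.sum_Icc_succ_top (by omega), ih]
    have h2 : (2 : ZMod 2) = 0 := rfl
    linear_combination f (b+1) * h2

private lemma count_pairs (n : ℕ) (v : ℕ → ZMod 2) :
    ((Finset.range n ×ˢ Finset.range n).filter fun q => q.1 < q.2 ∧ v q.1 ≠ v q.2).card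
    = ((Finset.range n).filter fun k => v k = 0).card *
      ((Finset.range n).filter fun k => v k = 1).card := by
  classical
  have hz : ∀ x : ZMod 2, x = 0 ∨ x = 1 := by decide
  rw [← Finset.card_product]
  refine Finset.card_bij' (fun q _ => if v q.1 = 0 then q else (q.2, q.1))
    (fun p _ => if p.1 < p.2 then p else (p.2, p.1)) ?_ ?_ ?_ ?_
  · rintro ⟨a, b⟩ hq
    simp only [Finset.mem_filter, Finset.mem_product, Finset.mem_range] at hq ⊢
    obtain ⟨⟨ha, hb⟩, hlt, hne⟩ := hq
    by_cases h0 : v a = 0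
    · simp only [h0, if_pos]
      rcases hz (v b) with h | h
      · exact absurd (h0.trans h.symm) hne
      · exact ⟨⟨ha, trivial⟩, hb, h⟩
    · simp only [h0, if_neg, not_false_iff]
      rcases hz (v a) with h | h
      · exact absurd h h0
      rcases hz (v b) with h' | h'
      · exact ⟨⟨hb, h'⟩, ha, h⟩
      · exact absurd (h.trans h'.symm) hne
  · rintro ⟨x, y⟩ hp
    simp only [Finset.mem_filter, Finset.mem_product, Finset.mem_range] at hp ⊢
    obtain ⟨⟨hx, h0⟩, hy, h1⟩ := hp
    have hne : x ≠ y := fun h => by rw [h, h1] at h0; exact one_ne_zero h0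
    by_cases hlt : x < y
    · simp only [hlt, if_pos]
      exact ⟨⟨hx, hy⟩, trivial, by rw [h0, h1]; decide⟩
    · simp only [hlt, if_neg, not_false_iff]
      exact ⟨⟨hy, hx⟩, by omega, by rw [h0, h1]; decide⟩
  · rintro ⟨a, b⟩ hq
    simp only [Finset.mem_filter, Finset.mem_product, Finset.mem_range] at hq
    obtain ⟨⟨ha, hb⟩, hlt, hne⟩ := hq
    by_cases h0 : v a = 0
    · simp [h0, hlt]
    · simp [h0, not_lt_of_gt hlt]
  · rintro ⟨x, y⟩ hp
    simp only [Finset.mem_filter, Finset.mem_product, Finset.mem_range] at hp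
    obtain ⟨⟨hx, h0⟩, hy, h1⟩ := hp
    by_cases hlt : x < y
    · simp [hlt, h0]
    · have : v y ≠ 0 := by rw [h1]; decide
      simp [hlt, this]

/-- The sequence of prefix vectors. -/
private def Sv (m : ℕ) (k : ℕ) (c : Fin m) : ZMod 2 :=
  (if Nat.testBit (k / 2) c.1 then 1 else 0) + (if k % 2 = 1 then 1 else 0)

private lemma Sv_inj {n : ℕ} (hn : 2 ≤ n) {a b : ℕ} (ha : a < n) (hb : b < n)
    (h : ∀ c : Fin (Nat.clog 2 n), Sv (Nat.clog 2 n) a c = Sv (Nat.clog 2 n) b c) : a = b := by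
  set m := Nat.clog 2 n with hm
  have hm1 : 1 ≤ m := Nat.clog_pos (by norm_num) hn
  have hpow : n ≤ 2 ^ m := Nat.le_pow_clog (by norm_num) n
  have h2m : 2 ^ m = 2 * 2 ^ (m - 1) := by
    rw [← pow_succ']
    congr 1
    omega
  have hhalf : ∀ x : ℕ, x < n → x / 2 < 2 ^ (m - 1) := by intro x hx; omega
  have htop : ∀ x : ℕ, x < n → Nat.testBit (x / 2) (m - 1) = false := fun x hx =>
    Nat.testBit_lt_two_pow (hhalf x hx)
  -- same parity
  by_cases hpar : a % 2 = b % 2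
  · have hbits : ∀ c : ℕ, Nat.testBit (a / 2) c = Nat.testBit (b / 2) c := by
      intro c
      by_cases hc : c < m
      · have := h ⟨c, hc⟩
        simp only [Sv, hpar] at this
        by_cases h1 : Nat.testBit (a/2) c <;> by_cases h2 : Nat.testBit (b/2) c <;>
          simp [h1, h2] at this ⊢ <;>
          revert this <;> decide
      · rw [Nat.testBit_lt_two_pow, Nat.testBit_lt_two_pow] <;>
          exact lt_of_lt_of_le (hhalf _ (by assumption)) (Nat.pow_le_pow_right (by norm_num) (by omega))
    have := Nat.eq_of_testBit_eq hbits
    omega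
  · exfalso
    have := h ⟨m - 1, by omega⟩
    simp only [Sv, htop a ha, htop b hb] at this
    have hab : a % 2 < 2 := Nat.mod_lt _ (by norm_num)
    have hbb : b % 2 < 2 := Nat.mod_lt _ (by norm_num)
    interval_cases h1 : a % 2 <;> interval_cases h2 : b % 2 <;> simp_all <;> revert this <;> decide

/-- Count of ones in a column among the first `2*t` prefix vectors. -/
private lemma Sv_count_even (m t : ℕ) (c : Fin m) :
    ((Finset.range (2*t)).filter fun k => Sv m k c = 1).card = t := by
  induction t with
  | zero => simp
  | succ t ih =>
    have : 2 * (t + 1) = (2*t + 1) + 1 := by ring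
    rw [this, Finset.range_add_one, Finset.range_add_one, Finset.filter_insert, Finset.filter_insert]
    have e1 : Sv m (2*t) c = (if Nat.testBit t c.1 then 1 else 0) := by
      simp [Sv, Nat.mul_div_cancel_left, Nat.mul_mod_right]
    have e2 : Sv m (2*t+1) c = (if Nat.testBit t c.1 then 1 else 0) + 1 := by
      have h1 : (2*t+1) / 2 = t := by omega
      have h2 : (2*t+1) % 2 = 1 := by omega
      simp [Sv, h1, h2]
    have hni : (2*t : ℕ) ∉ Finset.range (2*t) := by simp
    have hni' : (2*t+1 : ℕ) ∉ insert (2*t) (Finset.range (2*t)) := by simp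
    by_cases hb : Nat.testBit t c.1
    · rw [if_neg (by rw [e2, if_pos hb]; decide), if_pos (by rw [e1, if_pos hb]),
        Finset.card_insert_of_notMem (by simp), ih]
    · rw [if_pos (by rw [e2, if_neg hb]; decide), if_neg (by rw [e1, if_neg hb]; decide),
        Finset.card_insert_of_notMem (by simp), ih]

/-- there is a matrix `B` of size `(n−1) × ⌈log₂ n⌉` over
`ZMod 2` such that every XOR of a consecutive range of rows is nonzero, and in
every column exactly `⌊n/2⌋⌊(n+1)/2⌋` consecutive ranges sum to `1`. -/
theorem stmt18 {n : ℕ} (hn : 2 ≤ n) :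
    ∃ B : Matrix (Fin (n - 1)) (Fin (Nat.clog 2 n)) (ZMod 2),
      (∀ l h : Fin (n - 1), l ≤ h →
        (fun c => ∑ i ∈ Finset.Icc l h, B i c) ≠ (0 : Fin (Nat.clog 2 n) → ZMod 2)) ∧
      (∀ c : Fin (Nat.clog 2 n),
        (Finset.univ.filter fun p : Fin (n - 1) × Fin (n - 1) =>
            p.1 ≤ p.2 ∧ (∑ i ∈ Finset.Icc p.1 p.2, B i c) = 1).card
          = n / 2 * ((n + 1) / 2)) := by
  set m := Nat.clog 2 n with hm
  have h1pos : 0 < n - 1 := by omega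
  have key : ∀ (l h : Fin (n-1)) (c : Fin m), l ≤ h →
      ∑ i ∈ Finset.Icc l h, (Sv m (i.1+1) c + Sv m i.1 c)
        = Sv m (h.1+1) c + Sv m l.1 c := by
    intro l h c hlh
    have hmap := Finset.sum_map (Finset.Icc l h) Fin.valEmbedding
        (fun j => Sv m (j+1) c + Sv m j c)
    rw [Fin.map_valEmbedding_Icc] at hmap
    simp only [Fin.valEmbedding_apply] at hmap
    rw [← hmap]
    exact tele2 (fun k => Sv m k c) (Fin.le_def.mp hlh)
  refine ⟨fun i c => Sv m (i.1+1) c + Sv m i.1 c, ?_, ?_⟩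
  -- part 1
  · intro l h hlh heq
    have hne : l.1 ≠ h.1 + 1 := by have := h.isLt; omega
    apply hne
    apply Sv_inj hn (by have := l.isLt; omega) (by have := h.isLt; omega)
    intro c
    have := congrFun heq c
    simp only [key l h c hlh] at this
    have hz : ∀ x y : ZMod 2, x + y = 0 → x = y := by decide
    exact (hz _ _ this).symm
  -- part 2
  · intro c
    set v : ℕ → ZMod 2 := fun k => Sv m k c with hv
    have hxy : ∀ x y : ZMod 2, (x + y = 1 ↔ x ≠ y) := by decide
    have step1 : (Finset.univ.filter fun p : Fin (n - 1) × Fin (n - 1) =>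
            p.1 ≤ p.2 ∧ (∑ i ∈ Finset.Icc p.1 p.2, (Sv m (i.1+1) c + Sv m i.1 c)) = 1).card
        = ((Finset.range n ×ˢ Finset.range n).filter
            fun q => q.1 < q.2 ∧ v q.1 ≠ v q.2).card := by
      refine Finset.card_bij' (fun p _ => (p.1.1, p.2.1+1))
        (fun q _ => (⟨q.1 % (n-1), Nat.mod_lt _ h1pos⟩,
          ⟨(q.2-1) % (n-1), Nat.mod_lt _ h1pos⟩)) ?_ ?_ ?_ ?_
      · rintro ⟨l, h⟩ hp
        simp only [Finset.mem_filter, Finset.mem_univ, true_and] at hp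
        obtain ⟨hlh, hsum⟩ := hp
        rw [key l h c hlh] at hsum
        simp only [Finset.mem_filter, Finset.mem_product, Finset.mem_range]
        have h1 := l.isLt; have h2 := h.isLt
        have hle : l.1 ≤ h.1 := hlh
        exact ⟨⟨by omega, by omega⟩, by omega, ((hxy _ _).1 hsum).symm⟩
      · rintro ⟨a, b⟩ hq
        simp only [Finset.mem_filter, Finset.mem_product, Finset.mem_range] at hq
        obtain ⟨⟨ha, hb⟩, hlt, hne⟩ := hq
        have e1 : a % (n-1) = a := Nat.mod_eq_of_lt (by omega)
        have e2 : (b-1) % (n-1) = b-1 := Nat.mod_eq_of_lt (by omega)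
        simp only [Finset.mem_filter, Finset.mem_univ, true_and]
        constructor
        · show (⟨a % (n-1), _⟩ : Fin (n-1)) ≤ ⟨(b-1) % (n-1), _⟩
          rw [Fin.mk_le_mk, e1, e2]; omega
        · rw [key _ _ c (by rw [Fin.mk_le_mk, e1, e2]; omega)]
          simp only [e1, e2]
          have hb1 : b - 1 + 1 = b := by omega
          rw [hb1]
          exact (hxy _ _).2 hne.symm
      · rintro ⟨l, h⟩ hp
        have h1 := l.isLt; have h2 := h.isLt
        have e1 : l.1 % (n-1) = l.1 := Nat.mod_eq_of_lt h1
        have e2 : (h.1+1-1) % (n-1) = h.1 := by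
          rw [Nat.add_sub_cancel]; exact Nat.mod_eq_of_lt h2
        simp only [Prod.mk.injEq]
        exact ⟨Fin.ext e1, Fin.ext e2⟩
      · rintro ⟨a, b⟩ hq
        simp only [Finset.mem_filter, Finset.mem_product, Finset.mem_range] at hq
        obtain ⟨⟨ha, hb⟩, hlt, hne⟩ := hq
        have e1 : a % (n-1) = a := Nat.mod_eq_of_lt (by omega)
        have e2 : (b-1) % (n-1) = b-1 := Nat.mod_eq_of_lt (by omega)
        simp only [Prod.mk.injEq, e1, e2]
        refine ⟨trivial, ?_⟩
        omega
    rw [step1, count_pairs n v]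
    -- counts
    have hnot : ∀ x : ZMod 2, (¬ x = 1) ↔ x = 0 := by decide
    have hsplit : ((Finset.range n).filter fun k => v k = 0).card
        + ((Finset.range n).filter fun k => v k = 1).card = n := by
      have h := Finset.card_filter_add_card_filter_not
        (s := Finset.range n) (p := fun k => v k = 1)
      rw [Finset.card_range] at h
      have he : ((Finset.range n).filter fun k => ¬ v k = 1)
          = ((Finset.range n).filter fun k => v k = 0) :=
        Finset.filter_congr (fun k _ => hnot (v k))
      rw [he] at h
      omega
    rcases Nat.even_or_odd n with ⟨t, ht⟩ | ⟨t, ht⟩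
    · have hr : n = 2 * t := by omega
      have hc1 : ((Finset.range n).filter fun k => v k = 1).card = t := by
        rw [hr]; exact Sv_count_even m t c
      rw [hc1]
      have : ((Finset.range n).filter fun k => v k = 0).card = t := by omega
      rw [this]
      have e1 : n / 2 = t := by omega
      have e2 : (n+1) / 2 = t := by omega
      rw [e1, e2]
    · have hr : n = 2 * t + 1 := by omega
      have hins : Finset.range n = insert (2*t) (Finset.range (2*t)) := by
        rw [hr, Finset.range_add_one]
      have hbase := Sv_count_even m t c
      have hnm : (2*t : ℕ) ∉ Finset.range (2*t) := by simp
      have e1 : n / 2 = t := by omega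
      have e2 : (n+1) / 2 = t + 1 := by omega
      rw [e1, e2]
      by_cases hb : v (2*t) = 1
      · have hc1 : ((Finset.range n).filter fun k => v k = 1).card = t + 1 := by
          rw [hins, Finset.filter_insert, if_pos hb,
            Finset.card_insert_of_notMem (by simp), hbase]
        rw [hc1]
        have : ((Finset.range n).filter fun k => v k = 0).card = t := by omega
        rw [this]
      · have hc1 : ((Finset.range n).filter fun k => v k = 1).card = t := by
          rw [hins, Finset.filter_insert, if_neg hb, hbase]
        rw [hc1]
        have : ((Finset.range n).filter fun k => v k = 0).card = t + 1 := by omega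
        rw [this, Nat.add_mul, Nat.mul_add]
        ring
end
end

section
/- For every n ≥ 2, every XVCS (C0, C1) for the (2,n) access structure, with any pixel expansion m, has average contrast at most ⌊n/2⌋ · ⌊(n+1)/2⌋ / (n(n−1)/2). -/
open scoped Classical

noncomputable section

lemma nat_bound {k n : ℕ} (hk : k ≤ n) : k * (n - k) ≤ n / 2 * ((n + 1) / 2) := by
  have hab : n / 2 + (n + 1) / 2 = n := by omega
  have hba : n / 2 ≤ (n + 1) / 2 := by omega
  have hd : (n + 1) / 2 ≤ n / 2 + 1 := by omega
  set a := n / 2 with ha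
  set b := (n + 1) / 2 with hb
  zify [hk]
  rcases le_or_gt k a with hka | hka
  · nlinarith [hab, hba, hd]
  · have : (b : ℤ) ≤ k := by omega
    nlinarith [hab, hba, hd]

lemma colcount {n : ℕ} (c : Fin n → ZMod 2) :
    ((qualK n 2).filter fun Q => (∑ i ∈ Q, c i) = 1).card
      = (Finset.univ.filter fun i => c i = 1).card
        * (n - (Finset.univ.filter fun i => c i = 1).card) := by
  classical
  set S := Finset.univ.filter fun i : Fin n => c i = 1 with hS
  have hcompl : (Finset.univ.filter fun i : Fin n => ¬ c i = 1).card = n - S.card := by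
    have := Finset.card_filter_add_card_filter_not
      (s := (Finset.univ : Finset (Fin n))) (p := fun i => c i = 1)
    simp only [Finset.card_univ, Fintype.card_fin] at this
    rw [← hS] at this
    omega
  rw [← hcompl, ← Finset.card_product]
  have hz : ∀ x : ZMod 2, x = 0 ∨ x = 1 := by decide
  symm
  apply Finset.card_nbij (fun p => ({p.1, p.2} : Finset (Fin n)))
  · rintro ⟨a, b⟩ hab
    simp only [Finset.mem_coe, Finset.mem_product, Finset.mem_filter, Finset.mem_univ, true_and, hS] at hab
    obtain ⟨ha, hb⟩ := hab
    have hne : a ≠ b := fun hEq => hb (hEq ▸ ha)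
    simp only [Finset.mem_coe, Finset.mem_filter, qualK, Finset.mem_univ, true_and]
    constructor
    · exact Finset.card_pair hne
    · rw [Finset.sum_pair hne, ha]
      rcases hz (c b) with h0 | h1
      · rw [h0, add_zero]
      · exact absurd h1 hb
  · rintro ⟨a, b⟩ hab ⟨a', b'⟩ hab' hEq
    simp only [Finset.coe_filter, Finset.mem_product, Finset.mem_filter, Finset.mem_univ,
      true_and, Set.mem_setOf_eq, hS, Finset.mem_coe] at hab hab'
    obtain ⟨ha, hb⟩ := hab
    obtain ⟨ha', hb'⟩ := hab'
    simp only at hEq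
    have h1 : a ∈ ({a', b'} : Finset (Fin n)) := by rw [← hEq]; simp
    have h2 : b ∈ ({a', b'} : Finset (Fin n)) := by rw [← hEq]; simp
    have haa : a = a' := by
      rcases Finset.mem_insert.mp h1 with h | h
      · exact h
      · exact absurd ha (by rw [Finset.mem_singleton.mp h]; exact hb')
    have hbb : b = b' := by
      rcases Finset.mem_insert.mp h2 with h | h
      · exact absurd (h ▸ ha') hb
      · exact Finset.mem_singleton.mp h
    exact Prod.ext haa hbb
  · intro Q hQ
    simp only [Finset.coe_filter, Set.mem_setOf_eq, qualK, Finset.mem_filter,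
      Finset.mem_univ, true_and] at hQ
    obtain ⟨hcard, hsum⟩ := hQ
    obtain ⟨a, b, hne, rfl⟩ := Finset.card_eq_two.mp hcard
    rw [Finset.sum_pair hne] at hsum
    have memmk : ∀ x y : Fin n, c x = 1 → ¬ c y = 1 →
        (x, y) ∈ ↑(S ×ˢ Finset.univ.filter fun i => ¬ c i = 1) := by
      intro x y hx hy
      simp [hS, hx, hy]
    rcases hz (c a) with h0 | h1 <;> rcases hz (c b) with g0 | g1
    · rw [h0, g0] at hsum; exact absurd hsum (by decide)
    · exact ⟨(b, a), memmk b a g1 (by rw [h0]; decide), by simp [Finset.pair_comm]⟩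
    · exact ⟨(a, b), memmk a b h1 (by rw [g0]; decide), by simp⟩
    · rw [h1, g1] at hsum; exact absurd hsum (by decide)
lemma sum_wt_bound {n m : ℕ} (M : Matrix (Fin n) (Fin m) (ZMod 2)) :
    ∑ Q ∈ qualK n 2, wt (xorRows M Q) ≤ m * (n / 2 * ((n + 1) / 2)) := by
  have step : ∀ Q, wt (xorRows M Q)
      = ∑ j : Fin m, if xorRows M Q j = 1 then 1 else 0 := by
    intro Q
    rw [wt, Finset.card_filter]
  calc ∑ Q ∈ qualK n 2, wt (xorRows M Q)
      = ∑ Q ∈ qualK n 2, ∑ j : Fin m, if xorRows M Q j = 1 then 1 else 0 := by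
        exact Finset.sum_congr rfl fun Q _ => step Q
    _ = ∑ j : Fin m, ∑ Q ∈ qualK n 2, if xorRows M Q j = 1 then 1 else 0 :=
        Finset.sum_comm
    _ ≤ ∑ _j : Fin m, n / 2 * ((n + 1) / 2) := by
        apply Finset.sum_le_sum
        intro j _
        rw [← Finset.card_filter]
        have := colcount (fun i => M i j)
        have hxq : ((qualK n 2).filter fun Q => xorRows M Q j = 1).card
            = ((qualK n 2).filter fun Q => (∑ i ∈ Q, M i j) = 1).card := rfl
        rw [hxq, this]
        have hk : (Finset.univ.filter fun i : Fin n => M i j = 1).card ≤ n := by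
          simpa using Finset.card_le_univ (Finset.univ.filter fun i : Fin n => M i j = 1)
        exact nat_bound hk
    _ = m * (n / 2 * ((n + 1) / 2)) := by simp [Finset.sum_const, mul_comm]

lemma qualK_card (n : ℕ) : (qualK n 2).card = n * (n - 1) / 2 := by
  have : qualK n 2 = Finset.powersetCard 2 (Finset.univ : Finset (Fin n)) := by
    ext Q
    simp [qualK, Finset.mem_powersetCard]
  rw [this, Finset.card_powersetCard, Finset.card_univ, Fintype.card_fin,
    Nat.choose_two_right]

lemma msum_swap {α β : Type*} (s : Finset α) (t : Multiset β) (f : α → β → ℚ) :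
    ∑ a ∈ s, (t.map (f a)).sum = (t.map fun b => ∑ a ∈ s, f a b).sum := by
  induction t using Multiset.induction_on with
  | empty => simp
  | cons x t ih => simp [Multiset.sum_cons, Finset.sum_add_distrib, ih]

/-- every `(2,n)`-XVCS, with any pixel expansion, has average
contrast at most `⌊n/2⌋⌊(n+1)/2⌋ / (n(n−1)/2)`. -/
theorem stmt19 {n : ℕ} (hn : 2 ≤ n) (m : ℕ)
    (C0 C1 : Multiset (Matrix (Fin n) (Fin m) (ZMod 2)))
    (h : XVCS (qualK n 2) C0 C1) :
    avgContrast (qualK n 2) C0 C1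
      ≤ ((n / 2 * ((n + 1) / 2) : ℕ) : ℚ) / ((n * (n - 1) / 2 : ℕ) : ℚ) := by
  obtain ⟨h0, h1, -, -⟩ := h
  have hc0 : 0 < Multiset.card C0 := Multiset.card_pos.mpr h0
  have hc1 : 0 < Multiset.card C1 := Multiset.card_pos.mpr h1
  have hc0q : (0 : ℚ) < (Multiset.card C0 : ℚ) := by exact_mod_cast hc0
  have hc1q : (0 : ℚ) < (Multiset.card C1 : ℚ) := by exact_mod_cast hc1
  have hN : 1 ≤ n * (n - 1) / 2 := by
    have : 2 * 1 ≤ n * (n - 1) := Nat.mul_le_mul hn (by omega)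
    omega
  have hBnn : (0 : ℚ) ≤ ((n / 2 * ((n + 1) / 2) : ℕ) : ℚ) := Nat.cast_nonneg _
  rcases Nat.eq_zero_or_pos m with hm | hm
  · subst hm
    have : avgContrast (qualK n 2) C0 C1 = 0 := by
      simp [avgContrast]
    rw [this]
    exact div_nonneg hBnn (Nat.cast_nonneg _)
  · have hmq : (0 : ℚ) < (m : ℚ) := by exact_mod_cast hm
    rw [avgContrast]
    have hΓ : ((qualK n 2).card : ℚ) = ((n * (n - 1) / 2 : ℕ) : ℚ) := by
      rw [qualK_card]
    rw [← hΓ]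
    have hΓpos : (0 : ℚ) < ((qualK n 2).card : ℚ) := by
      rw [hΓ]; exact_mod_cast hN
    rw [div_le_div_iff_of_pos_right hΓpos]
    set B : ℚ := ((n / 2 * ((n + 1) / 2) : ℕ) : ℚ) with hB
    calc ∑ Q ∈ qualK n 2,
          ((C1.map fun M => (wt (xorRows M Q) : ℚ)).sum / (Multiset.card C1 : ℚ)
            - (C0.map fun M => (wt (xorRows M Q) : ℚ)).sum / (Multiset.card C0 : ℚ)) / (m : ℚ)
        ≤ ∑ Q ∈ qualK n 2,
          ((C1.map fun M => (wt (xorRows M Q) : ℚ)).sum / (Multiset.card C1 : ℚ)) / (m : ℚ) := by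
          apply Finset.sum_le_sum
          intro Q _
          apply div_le_div_of_nonneg_right ?_ hmq.le |>.trans_eq rfl
          apply sub_le_self
          apply div_nonneg ?_ hc0q.le
          apply Multiset.sum_nonneg
          intro x hx
          obtain ⟨M, -, rfl⟩ := Multiset.mem_map.mp hx
          exact Nat.cast_nonneg _
      _ = ((C1.map fun M => ∑ Q ∈ qualK n 2, (wt (xorRows M Q) : ℚ)).sum
            / (Multiset.card C1 : ℚ)) / (m : ℚ) := by
          rw [← msum_swap, ← Finset.sum_div, ← Finset.sum_div]
      _ ≤ (((Multiset.card C1 : ℚ) * ((m : ℚ) * B)) / (Multiset.card C1 : ℚ)) / (m : ℚ) := by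
          apply div_le_div_of_nonneg_right ?_ hmq.le
          apply div_le_div_of_nonneg_right ?_ hc1q.le |>.trans_eq rfl
          have hb : ∀ x ∈ C1.map fun M => ∑ Q ∈ qualK n 2, (wt (xorRows M Q) : ℚ),
              x ≤ (m : ℚ) * B := by
            intro x hx
            obtain ⟨M, -, rfl⟩ := Multiset.mem_map.mp hx
            have := sum_wt_bound M
            have hcast : ((∑ Q ∈ qualK n 2, wt (xorRows M Q) : ℕ) : ℚ)
                ≤ ((m * (n / 2 * ((n + 1) / 2)) : ℕ) : ℚ) := by exact_mod_cast this
            rw [hB]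
            push_cast at hcast ⊢
            exact hcast
          have := Multiset.sum_le_card_nsmul _ _ hb
          rw [Multiset.card_map] at this
          rw [nsmul_eq_mul] at this
          exact this
      _ = B := by
          field_simp
end
end
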